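/- (Lemma 2) For fixed A and Z, the total antisymmetrization over B₁,...,B_J of the (J+2)-bracket [A B₁ ⋯ B_J Z] equals J! times the antisymmetrization over the B's of Σ_{j=0}^{J} (−1)^j Σ_{k=0}^{J−j} (−1)^k [ B₁⋯B_k A B_{k+1}⋯B_{J−j} Z B_{J−j+1}⋯B_J − B₁⋯B_k Z B_{k+1}⋯B_{J−j} A B_{J−j+1}⋯B_J ]. -/

import Mathlib

/-- The Nambu `n`-bracket: signed sum over all permutations of the ordered product. -/
def nambu {R : Type*} [Ring R] {n : ℕ} (f : Fin n → R) : R :=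
  ∑ σ : Equiv.Perm (Fin n), (Equiv.Perm.sign σ : ℤ) • (List.ofFn (f ∘ σ)).prod

/-!
Group the `(J+2)!` permutations in the bracket `[A B₁ ⋯ B_J Z]` by the positions `p` of `A`
and `q` of `Z`: the rest is a word in the `B`'s ordered by some `ρ`, and the sign is
`(-1)^(p+q+J) sign ρ`. So the bracket is the antisymmetrization over the `B`'s of a signed sum
of words with `A` and `Z` inserted, and splitting that sum into `p ≤ q` and `p > q` gives the two
families of words of the formula. The bracket is itself alternating in the `B`'s, so
antisymmetrizing it once more only multiplies it by `J!`.
-/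

open Equiv Finset

section Antisymmetrize

variable {α M : Type*} [AddCommGroup M] {n : ℕ}

def antisymmetrize (Φ : (Fin n → α) → M) (f : Fin n → α) : M :=
  ∑ σ : Perm (Fin n), (Perm.sign σ : ℤ) • Φ (f ∘ σ)

theorem antisymmetrize_comp_perm (Φ : (Fin n → α) → M) (f : Fin n → α) (τ : Perm (Fin n)) :
    antisymmetrize Φ (f ∘ τ) = (Perm.sign τ : ℤ) • antisymmetrize Φ f := by
  rw [antisymmetrize, antisymmetrize, Finset.smul_sum, ← Equiv.sum_comp (Equiv.mulLeft τ⁻¹)]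
  refine Finset.sum_congr rfl fun σ _ => ?_
  rw [Equiv.coe_mulLeft, smul_smul, Perm.sign_mul, Perm.sign_inv, Perm.coe_mul,
    ← Function.comp_assoc, Function.comp_assoc f, ← Perm.coe_mul, mul_inv_cancel, Perm.coe_one,
    Function.comp_id, Units.val_mul]

theorem smul_sum_antisymmetrize {ι : Type*} (s : Finset ι) (c : ι → ℤ)
    (Φ : ι → (Fin n → α) → M) (f : Fin n → α) :
    ∑ i ∈ s, c i • antisymmetrize (Φ i) f = antisymmetrize (fun g => ∑ i ∈ s, c i • Φ i g) f := by
  simp only [antisymmetrize, Finset.smul_sum, smul_comm (c _)]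
  exact Finset.sum_comm

def insertNthPerm (i p : Fin (n + 1)) (e : Perm (Fin n)) : Perm (Fin (n + 1)) :=
  i.cycleRange.symm * Perm.decomposeFin.symm (0, e) * p.cycleRange

theorem comp_insertNthPerm (f : Fin (n + 1) → α) (i p : Fin (n + 1)) (e : Perm (Fin n)) :
    f ∘ insertNthPerm i p e = p.insertNth (f i) (f ∘ i.succAbove ∘ e) := by
  have hcons : (Fin.cons (f i) (i.removeNth f) : Fin (n + 1) → α) ∘ Perm.decomposeFin.symm (0, e)
      = Fin.cons (f i) (f ∘ i.succAbove ∘ e) := by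
    ext j; cases j using Fin.cases <;> simp [Fin.removeNth_apply]
  rw [insertNthPerm, Perm.coe_mul, Perm.coe_mul, ← Function.comp_assoc, ← Function.comp_assoc,
    ← Fin.cons_removeNth_eq_comp_cycleRange_symm, hcons, Fin.cons_comp_cycleRange]

theorem sign_insertNthPerm (i p : Fin (n + 1)) (e : Perm (Fin n)) :
    (Perm.sign (insertNthPerm i p e) : ℤ) = (-1) ^ ((i : ℕ) + p) * Perm.sign e := by
  simp [insertNthPerm, Perm.decomposeFin.symm_sign, pow_add, mul_right_comm]

theorem insertNthPerm_apply_self (i p : Fin (n + 1)) (e : Perm (Fin n)) :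
    insertNthPerm i p e p = i := by
  simp [insertNthPerm]

theorem insertNthPerm_bijective (i : Fin (n + 1)) :
    Function.Bijective (fun pe : Fin (n + 1) × Perm (Fin n) => insertNthPerm i pe.1 pe.2) := by
  refine (Fintype.bijective_iff_injective_and_card _).2
    ⟨?_, by simp [Fintype.card_perm, Nat.factorial_succ]⟩
  rintro ⟨p, e⟩ ⟨p', e'⟩ h
  obtain rfl : p = p' := (insertNthPerm i p' e').injective <| by
    rw [insertNthPerm_apply_self, ← show insertNthPerm i p e = insertNthPerm i p' e' from h,
      insertNthPerm_apply_self]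
  simpa [insertNthPerm] using h

theorem antisymmetrize_eq_sum_insertNth (Φ : (Fin (n + 1) → α) → M) (f : Fin (n + 1) → α)
    (i : Fin (n + 1)) :
    antisymmetrize Φ f = ∑ p : Fin (n + 1), ((-1) ^ ((i : ℕ) + p) : ℤ) •
      antisymmetrize (fun g => Φ (p.insertNth (f i) g)) (f ∘ i.succAbove) := by
  rw [antisymmetrize, ← Fintype.sum_bijective _ (insertNthPerm_bijective i)
    (fun pe => (Perm.sign (insertNthPerm i pe.1 pe.2) : ℤ) • Φ (f ∘ insertNthPerm i pe.1 pe.2)) _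
    fun _ => rfl, Fintype.sum_prod_type]
  simp only [antisymmetrize, Finset.smul_sum, smul_smul, comp_insertNthPerm, sign_insertNthPerm]
  rfl

end Antisymmetrize

theorem List.ofFn_insertNth {α : Type*} : ∀ {n : ℕ} (p : Fin (n + 1)) (x : α) (g : Fin n → α),
    List.ofFn (p.insertNth x g) = (List.ofFn g).take p ++ x :: (List.ofFn g).drop p
  | _, 0, x, g => by simp [Fin.insertNth_zero']
  | 0, ⟨p + 1, hp⟩, _, _ => absurd hp (by omega)
  | n + 1, ⟨p + 1, hp⟩, x, g => by
    rw [← Fin.cons_self_tail g,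
      show (⟨p + 1, hp⟩ : Fin (n + 2)) = (⟨p, by omega⟩ : Fin (n + 1)).succ from rfl,
      Fin.insertNth_succ_cons, List.ofFn_cons, List.ofFn_cons, List.ofFn_insertNth]
    simp

section Words

variable {R : Type*}

/-- The word `L` with `x` inserted before `L[a]` and `y` before `L[b]`; meaningful for
`a ≤ b ≤ L.length`. -/
def prodInsertTwo [Monoid R] (L : List R) (a b : ℕ) (x y : R) : R :=
  (L.take a).prod * x * ((L.take b).drop a).prod * y * (L.drop b).prod

theorem prod_insert_insert_of_le [Monoid R] (L : List R) (A Z : R) {p q : ℕ} (hpq : p ≤ q)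
    (hq : q ≤ L.length) :
    ((L.take q ++ Z :: L.drop q).take p ++ A :: (L.take q ++ Z :: L.drop q).drop p).prod =
      prodInsertTwo L p q A Z := by
  simp [prodInsertTwo, List.take_append, List.drop_append, hpq, hq, List.take_take,
    Nat.sub_eq_zero_of_le, mul_assoc]

theorem prod_insert_succ_insert_of_le [Monoid R] (L : List R) (A Z : R) {q b : ℕ} (hqb : q ≤ b)
    (hb : b ≤ L.length) :
    ((L.take q ++ Z :: L.drop q).take (b + 1) ++
        A :: (L.take q ++ Z :: L.drop q).drop (b + 1)).prod =
      prodInsertTwo L q b Z A := by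
  have hlen : (L.take q).length = q := by simp; omega
  have h1 : b + 1 - q = (b - q) + 1 := by omega
  simp [prodInsertTwo, List.take_append, List.drop_append, hlen, h1, List.take_of_length_le,
    List.drop_eq_nil_of_le, List.drop_take, List.drop_drop, mul_assoc, show q ≤ b + 1 by omega,
    Nat.add_sub_cancel' hqb]

variable [Ring R]

theorem sum_range_prod_insert_insert (L : List R) (A Z : R) {n q : ℕ} (hqn : q ≤ n)
    (hn : n ≤ L.length) :
    ∑ p ∈ range (n + 2), ((-1 : ℤ) ^ (p + (n + q))) •
        ((L.take q ++ Z :: L.drop q).take p ++ A :: (L.take q ++ Z :: L.drop q).drop p).prod =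
      ∑ a ∈ range (q + 1), ((-1 : ℤ) ^ (a + (n + q))) • prodInsertTwo L a q A Z -
        ∑ b ∈ Ico q (n + 1), ((-1 : ℤ) ^ (q + (n + b))) • prodInsertTwo L q b Z A := by
  rw [← sum_range_add_sum_Ico _ (show q + 1 ≤ n + 2 by omega), ← sum_Ico_add', sub_eq_add_neg,
    ← sum_neg_distrib]
  congr 1
  · refine Finset.sum_congr rfl fun a ha => ?_
    rw [prod_insert_insert_of_le L A Z (Nat.lt_succ_iff.mp (mem_range.mp ha)) (hqn.trans hn)]
  · refine Finset.sum_congr rfl fun b hb => ?_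
    obtain ⟨hqb, hbn⟩ := mem_Ico.mp hb
    rw [prod_insert_succ_insert_of_le L A Z hqb (by omega),
      show b + 1 + (n + q) = q + (n + b) + 1 by omega, pow_succ, mul_neg_one, neg_smul]

def orderedInsertions {n : ℕ} (A Z : R) (w : Fin n → R) : R :=
  ∑ j ∈ range (n + 1), ∑ k ∈ range (n - j + 1), ((-1 : ℤ) ^ (j + k)) •
    (prodInsertTwo (List.ofFn w) k (n - j) A Z - prodInsertTwo (List.ofFn w) k (n - j) Z A)

theorem sum_prod_insertNth_insertNth {n : ℕ} (A Z : R) (w : Fin n → R) :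
    ∑ p : Fin (n + 2), ∑ q : Fin (n + 1), ((-1 : ℤ) ^ ((p : ℕ) + (n + q))) •
      (List.ofFn (p.insertNth A (q.insertNth Z w))).prod = orderedInsertions A Z w := by
  set L := List.ofFn w
  set G : ℕ → ℕ → R := fun p q => ((-1 : ℤ) ^ (p + (n + q))) •
    ((L.take q ++ Z :: L.drop q).take p ++ A :: (L.take q ++ Z :: L.drop q).drop p).prod
  calc _ = ∑ q : Fin (n + 1), ∑ p : Fin (n + 2), G p q := by
        rw [Finset.sum_comm]; simp only [G, List.ofFn_insertNth, L]
    _ = ∑ q ∈ range (n + 1), ∑ p ∈ range (n + 2), G p q := by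
        rw [Fin.sum_univ_eq_sum_range (fun q => ∑ p : Fin (n + 2), G p q)]
        exact Finset.sum_congr rfl fun q _ => Fin.sum_univ_eq_sum_range (G · q) _
    _ = ∑ q ∈ range (n + 1),
          (∑ a ∈ range (q + 1), ((-1 : ℤ) ^ (a + (n + q))) • prodInsertTwo L a q A Z -
            ∑ b ∈ Ico q (n + 1), ((-1 : ℤ) ^ (q + (n + b))) • prodInsertTwo L q b Z A) :=
        Finset.sum_congr rfl fun q hq => sum_range_prod_insert_insert L A Z
          (Nat.lt_succ_iff.mp (mem_range.mp hq)) List.length_ofFn.ge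
    _ = ∑ b ∈ range (n + 1), ∑ a ∈ range (b + 1), ((-1 : ℤ) ^ (a + (n + b))) •
          (prodInsertTwo L a b A Z - prodInsertTwo L a b Z A) := by
        simp only [smul_sub, sum_sub_distrib, range_eq_Ico, sum_Ico_Ico_comm]
    _ = orderedInsertions A Z w := by
        rw [orderedInsertions, ← sum_range_reflect]
        refine Finset.sum_congr rfl fun b hb => ?_
        have hbn : b ≤ n := Nat.lt_succ_iff.mp (mem_range.mp hb)
        rw [show n + 1 - 1 - b = n - b by omega]
        refine Finset.sum_congr rfl fun a _ => ?_
        rw [show a + (n + (n - b)) = b + a + 2 * (n - b) by omega, pow_add _ (b + a), pow_mul,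
          neg_one_sq, one_pow, mul_one]

theorem nambu_eq_antisymmetrize {n : ℕ} (f : Fin n → R) :
    nambu f = antisymmetrize (fun g => (List.ofFn g).prod) f := rfl

theorem nambu_cons_snoc {n : ℕ} (A Z : R) (C : Fin n → R) :
    nambu (Fin.cons A (Fin.snoc C Z) : Fin (n + 2) → R) =
      antisymmetrize (orderedInsertions A Z) C := by
  rw [nambu_eq_antisymmetrize, antisymmetrize_eq_sum_insertNth _ _ 0]
  simp only [Fin.cons_zero, Fin.val_zero, zero_add, Fin.succAbove_zero, Fin.cons_comp_succ]
  simp only [antisymmetrize_eq_sum_insertNth _ (Fin.snoc C Z) (Fin.last n), Fin.snoc_last,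
    Fin.val_last, Fin.succAbove_last, Fin.snoc_comp_castSucc]
  simp only [smul_sum_antisymmetrize, Finset.smul_sum, smul_smul, ← pow_add,
    sum_prod_insertNth_insertNth]

end Words

/-- Lemma 2: antisymmetrized `[A B₁ ⋯ B_J Z]` resolved into ordered words. -/
theorem lemma_two {R : Type*} [Ring R] {J : ℕ} (A Z : R) (B : Fin J → R) :
    ∑ τ : Equiv.Perm (Fin J), (Equiv.Perm.sign τ : ℤ) •
        nambu (Fin.cons A (Fin.snoc (B ∘ τ) Z)) =
      (J.factorial : ℤ) • ∑ τ : Equiv.Perm (Fin J), (Equiv.Perm.sign τ : ℤ) •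
        ∑ j ∈ Finset.range (J + 1), ∑ k ∈ Finset.range (J - j + 1),
          ((-1 : ℤ) ^ (j + k)) •
            ((((List.ofFn (B ∘ τ)).take k).prod * A *
                (((List.ofFn (B ∘ τ)).take (J - j)).drop k).prod * Z *
                ((List.ofFn (B ∘ τ)).drop (J - j)).prod) -
             (((List.ofFn (B ∘ τ)).take k).prod * Z *
                (((List.ofFn (B ∘ τ)).take (J - j)).drop k).prod * A *
                ((List.ofFn (B ∘ τ)).drop (J - j)).prod)) := by
  have h (τ : Perm (Fin J)) : (Perm.sign τ : ℤ) • nambu (Fin.cons A (Fin.snoc (B ∘ τ) Z)) =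
      antisymmetrize (orderedInsertions A Z) B := by
    rw [nambu_cons_snoc, antisymmetrize_comp_perm, smul_smul, ← Units.val_mul, Int.units_mul_self,
      Units.val_one, one_smul]
  rw [Finset.sum_congr rfl fun τ _ => h τ, sum_const, card_univ, Fintype.card_perm,
    Fintype.card_fin, natCast_zsmul]
  rfl
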